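/- For every ℓ ∈ {1,…,k−1}: max over all subsets T of the ground set of (v''_ℓ(T) − v''_{ℓ+1}(T)) ≥ (k+ℓ) · max over all A ⊆ Fin m of (v(A) − w(A)), where the differences are taken in ℤ. -/

import Mathlib

open Finset

/-- The `i`-th coordinate of a subset of the ground set consisting of `k−1`
disjoint copies of `Fin m`: the part of `S` inside copy `M_i`, viewed as a
subset of `Fin m`. (Copies are indexed `0,…,k−2`, copy `i` being `M_{i+1}`.) -/
def copyPart (m k : ℕ) (S : Finset (Fin (k - 1) × Fin m)) (i : Fin (k - 1)) :
    Finset (Fin m) :=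
  (S.filter (fun p => p.1 = i)).image Prod.snd

/-- The scaled disjoint union `v_ℓ(S) = Σ_{i≥ℓ} (k+i)·v(S_i) + Σ_{i<ℓ} (k+i)·w(S_i)`
(indices `i ∈ {1,…,k−1}`, here represented by `Fin (k-1)` shifted by one). -/
def scaledDU (m k : ℕ) (v w : Finset (Fin m) → ℕ) (ℓ : ℕ)
    (S : Finset (Fin (k - 1) × Fin m)) : ℕ :=
  ∑ i : Fin (k - 1), (k + (i : ℕ) + 1) *
    (if ℓ ≤ (i : ℕ) + 1 then v (copyPart m k S i) else w (copyPart m k S i))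

/-- `v''_ℓ`, the `ℓ`-th function of the instance `VT(v,w)`: the value truncation
at `x = 2k·v([m])` of the scaled disjoint union `v_ℓ`. -/
def VTfun (m k : ℕ) (v w : Finset (Fin m) → ℕ) (ℓ : ℕ)
    (S : Finset (Fin (k - 1) × Fin m)) : ℕ :=
  min (scaledDU m k v w ℓ S) (2 * k * v (Finset.univ : Finset (Fin m)))

/-!
Take `T = {ℓ} × A` for a maximiser `A` of `v − w`: copy `M_ℓ` is the only one on which `v_ℓ`
and `v_{ℓ+1}` differ, so `v_ℓ(T) = (k+ℓ)·v(A)` and `v_{ℓ+1}(T) = (k+ℓ)·w(A)`. The first stays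
below the truncation level `2k·v([m])`, and truncating the second can only lower it.
-/

lemma copyPart_singleton_product (m k : ℕ) (i₀ i : Fin (k - 1)) (A : Finset (Fin m)) :
    copyPart m k ({i₀} ×ˢ A) i = if i = i₀ then A else ∅ := by
  ext a
  split_ifs with h
  · simp [copyPart, h]
  · simp [copyPart, Ne.symm h]

lemma scaledDU_singleton_product (m k : ℕ) (v w : Finset (Fin m) → ℕ)
    (hv0 : v ∅ = 0) (hw0 : w ∅ = 0) (ℓ : ℕ) (i : Fin (k - 1)) (A : Finset (Fin m)) :
    scaledDU m k v w ℓ ({i} ×ˢ A) =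
      (k + i + 1) * (if ℓ ≤ i + 1 then v A else w A) := by
  rw [scaledDU, sum_eq_single i]
  · rw [copyPart_singleton_product, if_pos rfl, mul_ite]
  · intro j _ hj
    rw [copyPart_singleton_product, if_neg hj, hv0, hw0, ite_self, mul_zero]
  · simp

lemma VTfun_singleton_product_eq (m k : ℕ) (v w : Finset (Fin m) → ℕ)
    (hv0 : v ∅ = 0) (hw0 : w ∅ = 0) (hvmono : ∀ A B : Finset (Fin m), A ⊆ B → v A ≤ v B)
    (i : Fin (k - 1)) (A : Finset (Fin m)) :
    VTfun m k v w (i + 1) ({i} ×ˢ A) = (k + i + 1) * v A := by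
  rw [VTfun, scaledDU_singleton_product m k v w hv0 hw0, if_pos le_rfl, min_eq_left]
  calc (k + i + 1) * v A ≤ 2 * k * v A := by gcongr; omega
    _ ≤ 2 * k * v univ := by gcongr; exact hvmono A univ (subset_univ A)

lemma VTfun_singleton_product_le (m k : ℕ) (v w : Finset (Fin m) → ℕ)
    (hv0 : v ∅ = 0) (hw0 : w ∅ = 0) (i : Fin (k - 1)) (A : Finset (Fin m)) :
    VTfun m k v w (i + 2) ({i} ×ˢ A) ≤ (k + i + 1) * w A := by
  rw [VTfun, scaledDU_singleton_product m k v w hv0 hw0, if_neg (by omega)]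
  exact min_le_left _ _

theorem VT_consecutive_difference_ge_general (m k : ℕ)
    (v w : Finset (Fin m) → ℕ)
    (hv0 : v ∅ = 0) (hw0 : w ∅ = 0)
    (hvmono : ∀ A B : Finset (Fin m), A ⊆ B → v A ≤ v B) :
    ∀ ℓ : ℕ, 1 ≤ ℓ → ℓ ≤ k - 1 →
      (k + ℓ : ℤ) *
          ((Finset.univ : Finset (Fin m)).powerset.sup'
            ⟨∅, Finset.empty_mem_powerset _⟩
            (fun A => (v A : ℤ) - w A))
        ≤ (Finset.univ : Finset (Fin (k - 1) × Fin m)).powerset.sup'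
            ⟨∅, Finset.empty_mem_powerset _⟩
            (fun T => (VTfun m k v w ℓ T : ℤ) - VTfun m k v w (ℓ + 1) T) := by
  intro ℓ hℓ1 hℓk
  obtain ⟨i, rfl⟩ : ∃ i : Fin (k - 1), ℓ = i + 1 :=
    ⟨⟨ℓ - 1, by omega⟩, (by omega : ℓ = ℓ - 1 + 1)⟩
  obtain ⟨A, -, hA⟩ := exists_mem_eq_sup' ⟨∅, empty_mem_powerset _⟩ fun A => (v A : ℤ) - w A
  rw [hA]
  refine le_trans ?_ (le_sup' _ (mem_powerset.2 (subset_univ ({i} ×ˢ A))))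
  have hw : (VTfun m k v w (i + 2) ({i} ×ˢ A) : ℤ) ≤ (k + i + 1) * w A := by
    exact_mod_cast VTfun_singleton_product_le m k v w hv0 hw0 i A
  rw [VTfun_singleton_product_eq m k v w hv0 hw0 hvmono]
  push_cast
  linarith

/-- For every `ℓ ∈ {1,…,k−1}`, the maximum over subsets `T` of the ground set
of `v''_ℓ(T) − v''_{ℓ+1}(T)` is at least `(k+ℓ)` times the maximum over
`A ⊆ Fin m` of `v(A) − w(A)` (differences in `ℤ`). -/
theorem VT_consecutive_difference_ge (m k : ℕ) (hk : 2 ≤ k)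
    (v w : Finset (Fin m) → ℕ)
    (hv0 : v ∅ = 0) (hw0 : w ∅ = 0)
    (hvmono : ∀ A B : Finset (Fin m), A ⊆ B → v A ≤ v B)
    (hwmono : ∀ A B : Finset (Fin m), A ⊆ B → w A ≤ w B) :
    ∀ ℓ : ℕ, 1 ≤ ℓ → ℓ ≤ k - 1 →
      (k + ℓ : ℤ) *
          ((Finset.univ : Finset (Fin m)).powerset.sup'
            ⟨∅, Finset.empty_mem_powerset _⟩
            (fun A => (v A : ℤ) - w A))
        ≤ (Finset.univ : Finset (Fin (k - 1) × Fin m)).powerset.sup'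
            ⟨∅, Finset.empty_mem_powerset _⟩
            (fun T => (VTfun m k v w ℓ T : ℤ) - VTfun m k v w (ℓ + 1) T) :=
  VT_consecutive_difference_ge_general m k v w hv0 hw0 hvmono
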